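/- Let $A \subset \mathbb{R}^d$ be compact with $C^{1,1}$ boundary and $\overline{A^o} = A$, and suppose $\tau > 0$ satisfies the sphere condition for $A$. Let $0 < r < \tau$ and let $x \in A$ with $a := \mathrm{dist}(x, \partial A) < r$. Then $$\Big| |B_r(x) \cap A| - \big(\tfrac{1}{2}\theta_d + h(a/r)\big) r^d \Big| \leq \frac{2\theta_{d-1} r^{d+1}}{\tau},$$ where $h(u) = |B_1(o) \cap ([0,u]\times\mathbb{R}^{d-1})|$. -/

import Mathlib

/-!
Let `z` be a boundary point nearest to `x` and `n` the inner unit normal at `z`. The open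
exterior tangent ball at `z` misses `A ⊇ B(x, a)`, which forces `x = z + a n`. Measuring heights
`⟪n, y - z⟫` above the tangent hyperplane at `z`, the interior tangent ball contains every point of
`B_r(x)` of height at least `3r²/(2τ)`, and the exterior one excludes every point of height below
`-r²/(2τ)`. Hence `B_r(x) ∩ A` differs from the half-ball `B_r(x) ∩ {height ≥ 0}`, whose volume is
`(θ_d/2 + h(a/r)) r^d`, only inside a slab of width `2r²/τ`, whose intersection with `B_r(x)`
lies in a cylinder of volume `(2r²/τ) θ_{d-1} r^{d-1}`.
-/

open MeasureTheory Metric Set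
open scoped RealInnerProductSpace Pointwise

/-- θ_n, the Lebesgue volume of the unit Euclidean ball in ℝ^n. -/
noncomputable def ubv (n : ℕ) : ℝ :=
  (volume (Metric.ball (0 : EuclideanSpace ℝ (Fin n)) 1)).toReal

/-- `τ` satisfies the sphere condition for `A`: at every boundary point there is a unit
(inward normal) vector `n` with `B(x+τn, τ) ⊆ A` and `B(x-τn, τ) ∩ A = {x}`. -/
def SphereCond (d : ℕ) (A : Set (EuclideanSpace ℝ (Fin d))) (τ : ℝ) : Prop :=
  ∀ x ∈ frontier A, ∃ n : EuclideanSpace ℝ (Fin d), ‖n‖ = 1 ∧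
    Metric.closedBall (x + τ • n) τ ⊆ A ∧ Metric.closedBall (x - τ • n) τ ∩ A = {x}

/-- `A ⊆ ℝ^d` has a `C^{1,1}` boundary: near every boundary point, after a rotation
(linear isometry) `A` coincides with the closed epigraph of a Lipschitz-continuously
differentiable function of the first `d-1` coordinates. -/
def HasC11Boundary (d : ℕ) (A : Set (EuclideanSpace ℝ (Fin d))) : Prop :=
  ∀ x ∈ frontier A,
    ∃ (R : EuclideanSpace ℝ (Fin d) ≃ₗᵢ[ℝ] EuclideanSpace ℝ (Fin d))
      (f : EuclideanSpace ℝ (Fin (d-1)) → ℝ) (ε : ℝ) (L : NNReal),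
      0 < ε ∧ ContDiff ℝ 1 f ∧ LipschitzWith L (fderiv ℝ f) ∧
      ∀ p : EuclideanSpace ℝ (Fin d), p ∈ Metric.ball (R x) ε →
        (p ∈ R '' A ↔
          f (WithLp.toLp 2 (fun i => p (Fin.castLE (Nat.sub_le d 1) i))) ≤
            (if h : 0 < d then p ⟨d-1, by omega⟩ else 0))

/-- The volume `h(u)` of the slab `B_1(o) ∩ ([0,u] × ℝ^{d-1})` of the unit ball in ℝ^d. -/
noncomputable def slabVol (d : ℕ) (u : ℝ) : ℝ :=
  (volume {y : EuclideanSpace ℝ (Fin d) |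
    ‖y‖ ≤ 1 ∧ ∃ h : 0 < d, y ⟨0, h⟩ ∈ Set.Icc (0:ℝ) u}).toReal

theorem IsCompact.exists_mem_frontier_ball_subset {E : Type*} [NormedAddCommGroup E]
    [NormedSpace ℝ E] [Nontrivial E] {K : Set E} (hK : IsCompact K) {x : E} (hx : x ∈ K) :
    ∃ z ∈ frontier K, dist x z = infDist x (frontier K) ∧ ball x (dist x z) ⊆ K := by
  obtain ⟨z, hz, hxz⟩ := hK.exists_mem_frontier_infDist_compl_eq_dist hx
  have hle : infDist x Kᶜ ≤ infDist x (frontier K) := by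
    rw [← infDist_closure (s := Kᶜ)]
    exact infDist_le_infDist_of_subset
      (frontier_eq_closure_inter_closure (s := K) ▸ inter_subset_right) ⟨z, hz⟩
  refine ⟨z, hz, le_antisymm (hxz ▸ hle) (infDist_le_dist_of_mem hz), ?_⟩
  exact hxz ▸ ball_infDist_compl_subset

theorem eq_add_dist_smul_of_disjoint_ball {E : Type*} [NormedAddCommGroup E] [NormedSpace ℝ E]
    [StrictConvexSpace ℝ E] {x z n : E} {τ : ℝ} (hτ : 0 < τ) (hn : ‖n‖ = 1)
    (h : Disjoint (ball x (dist x z)) (ball (z - τ • n) τ)) : x = z + dist x z • n := by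
  rcases (dist_nonneg : 0 ≤ dist x z).eq_or_lt with hxz | hxz
  · rw [← hxz, zero_smul, add_zero, ← dist_eq_zero, hxz]
  have hτn : ‖τ • n‖ = τ := by rw [norm_smul, hn, Real.norm_of_nonneg hτ.le, mul_one]
  -- disjointness gives equality in the triangle inequality `x → z → z - τ • n`
  have hray : SameRay ℝ (x - z) (τ • n) := by
    refine sameRay_iff_norm_add.2 (le_antisymm (norm_add_le _ _) ?_)
    have := (disjoint_ball_ball_iff hxz hτ).1 h
    rwa [hτn, ← dist_eq_norm, sub_add_eq_add_sub, ← sub_sub_eq_add_sub, ← dist_eq_norm]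
  have hxz' : x - z ≠ 0 := sub_ne_zero.2 (dist_pos.1 hxz)
  have hτn0 : τ • n ≠ 0 := norm_ne_zero_iff.1 (hτn.trans_ne hτ.ne')
  have := (sameRay_iff_inv_norm_smul_eq_of_ne hxz' hτn0).1 hray
  rw [hτn, smul_smul, inv_mul_cancel₀ hτ.ne', one_smul] at this
  rw [← this, smul_smul, dist_eq_norm, mul_inv_cancel₀ (norm_ne_zero_iff.2 hxz'), one_smul,
    add_sub_cancel]

section InnerProduct

variable {E : Type*} [NormedAddCommGroup E] [InnerProductSpace ℝ E]

theorem norm_sub_smul_sq {n : E} (hn : ‖n‖ = 1) (w : E) (c : ℝ) :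
    ‖w - c • n‖ ^ 2 = ‖w‖ ^ 2 - 2 * c * ⟪n, w⟫ + c ^ 2 := by
  rw [norm_sub_sq_real, real_inner_smul_right, norm_smul, hn, real_inner_comm, Real.norm_eq_abs,
    mul_one, sq_abs]
  ring

variable {z n : E} {a r τ : ℝ}

theorem closedBall_inter_halfspace_subset_closedBall (hn : ‖n‖ = 1) (ha : 0 ≤ a) (har : a ≤ r)
    (hrτ : r ≤ τ) (hτ : 0 < τ) :
    closedBall (z + a • n) r ∩ {y | 3 * r ^ 2 / (2 * τ) ≤ ⟪n, y - z⟫} ⊆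
      closedBall (z + τ • n) τ := by
  rintro y ⟨hy, hyn⟩
  rw [mem_closedBall_iff_norm, sub_add_eq_sub_sub] at hy ⊢
  rw [mem_ofPred_eq, div_le_iff₀ (by positivity)] at hyn
  have hy2 := norm_sub_smul_sq hn (y - z) a ▸ pow_le_pow_left₀ (norm_nonneg _) hy 2
  refine pow_le_pow_iff_left₀ (norm_nonneg _) hτ.le two_ne_zero |>.1 ?_
  rw [norm_sub_smul_sq hn]
  -- the heart is `3 a r² / τ ≤ 3 a r ≤ 2 r² + a²`, i.e. `(2 r - a) (r - a) ≥ 0`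
  nlinarith [mul_nonneg (mul_nonneg hτ.le (sub_nonneg.2 har)) (by linarith : 0 ≤ 2 * r - a),
    mul_nonneg (sub_nonneg.2 hrτ) ha, mul_nonneg (mul_nonneg (sub_nonneg.2 hrτ) ha) (sq_nonneg r)]

theorem closedBall_inter_subset_halfspace_of_disjoint_ball (hn : ‖n‖ = 1) (ha : 0 ≤ a)
    (hτ : 0 < τ) {A : Set E} (hA : Disjoint A (ball (z - τ • n) τ)) :
    closedBall (z + a • n) r ∩ A ⊆ {y | -(r ^ 2 / (2 * τ)) ≤ ⟪n, y - z⟫} := by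
  rintro y ⟨hy, hyA⟩
  rw [mem_ofPred_eq]
  refine le_of_not_gt fun hyn => hA.ne_of_mem hyA ?_ rfl
  rw [mem_closedBall_iff_norm, sub_add_eq_sub_sub] at hy
  rw [mem_ball_iff_norm, sub_sub_eq_add_sub, add_sub_right_comm, ← sub_neg_eq_add, ← neg_smul]
  rw [lt_neg, div_lt_iff₀ (by positivity)] at hyn
  have hy2 := norm_sub_smul_sq hn (y - z) a ▸ pow_le_pow_left₀ (norm_nonneg _) hy 2
  refine pow_lt_pow_iff_left₀ (norm_nonneg _) hτ.le two_ne_zero |>.1 ?_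
  rw [norm_sub_smul_sq hn]
  nlinarith [mul_nonneg ha hτ.le]

end InnerProduct

theorem SphereCond.exists_eq_add_infDist_smul {m : ℕ} {A : Set (EuclideanSpace ℝ (Fin (m + 1)))}
    {τ : ℝ} (hsc : SphereCond (m + 1) A τ) (hτ : 0 < τ) (hA : IsCompact A)
    {x : EuclideanSpace ℝ (Fin (m + 1))} (hx : x ∈ A) :
    ∃ z n, ‖n‖ = 1 ∧ x = z + infDist x (frontier A) • n ∧ closedBall (z + τ • n) τ ⊆ A ∧
      Disjoint A (ball (z - τ • n) τ) := by
  obtain ⟨z, hz, hxz, hball⟩ := hA.exists_mem_frontier_ball_subset hx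
  obtain ⟨n, hn, hin, hout⟩ := hsc z hz
  have hext : Disjoint A (ball (z - τ • n) τ) := by
    refine Set.disjoint_left.2 fun y hyA hy => ?_
    obtain rfl : y = z := hout.subset ⟨ball_subset_closedBall hy, hyA⟩
    simp [norm_smul, hn, abs_of_pos hτ] at hy
  refine ⟨z, n, hn, ?_, hin, hext⟩
  rw [← hxz]
  exact eq_add_dist_smul_of_disjoint_ball hτ hn (hext.mono_left hball)

section Coordinates

variable {ι : Type*} [Fintype ι]

theorem measurableSet_coord_mem (i : ι) {S : Set ℝ} (hS : MeasurableSet S) :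
    MeasurableSet {u : EuclideanSpace ℝ ι | u i ∈ S} :=
  (EuclideanSpace.proj i).continuous.measurable hS

theorem volume_coord_eq_zero (i : ι) : volume {u : EuclideanSpace ℝ ι | u i = 0} = 0 := by
  classical
  have hker : {u : EuclideanSpace ℝ ι | u i = 0} =
      (LinearMap.ker (EuclideanSpace.proj i : EuclideanSpace ℝ ι →L[ℝ] ℝ).toLinearMap : Set _) := by
    ext u; simp
  rw [hker]
  refine Measure.addHaar_submodule _ _ fun htop => ?_
  have := htop ▸ Submodule.mem_top (x := EuclideanSpace.single i (1 : ℝ))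
  simp at this

theorem volume_union_neg {i : ι} {s t : Set (EuclideanSpace ℝ ι)} (hs : ∀ u ∈ s, 0 ≤ u i)
    (ht : ∀ u ∈ t, 0 ≤ u i) (htm : MeasurableSet t) : volume (s ∪ -t) = volume s + volume t := by
  rw [measure_union₀ htm.neg.nullMeasurableSet ?_, Measure.measure_neg]
  refine measure_mono_null (fun u hu => ?_) (volume_coord_eq_zero i)
  have := ht _ hu.2
  simp only [PiLp.neg_apply, neg_nonneg] at this
  exact le_antisymm this (hs u hu.1)

theorem two_mul_volume_closedBall_inter_coord_nonneg (i : ι) :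
    2 * volume (closedBall (0 : EuclideanSpace ℝ ι) 1 ∩ {u | 0 ≤ u i}) =
      volume (closedBall (0 : EuclideanSpace ℝ ι) 1) := by
  set S := closedBall (0 : EuclideanSpace ℝ ι) 1 ∩ {u | 0 ≤ u i}
  have hS : closedBall 0 1 = S ∪ -S := by
    ext u
    simp only [S, mem_union, mem_inter_iff, Set.mem_neg, mem_closedBall_zero_iff, norm_neg,
      mem_ofPred_eq, PiLp.neg_apply, neg_nonneg]
    constructor
    · intro hu; rcases le_total 0 (u i) with h | h <;> tauto
    · tauto
  have hSm : MeasurableSet S :=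
    measurableSet_closedBall.inter (measurableSet_coord_mem i measurableSet_Ici)
  rw [hS, volume_union_neg (fun u hu => hu.2) (fun u hu => hu.2) hSm, two_mul]

theorem volume_closedBall_inter_coord_ge_neg (i : ι) {w : ℝ} (hw : 0 ≤ w) :
    volume (closedBall (0 : EuclideanSpace ℝ ι) 1 ∩ {u | -w ≤ u i}) =
      volume (closedBall (0 : EuclideanSpace ℝ ι) 1 ∩ {u | 0 ≤ u i}) +
        volume (closedBall (0 : EuclideanSpace ℝ ι) 1 ∩ {u | u i ∈ Icc 0 w}) := by
  have hS : closedBall (0 : EuclideanSpace ℝ ι) 1 ∩ {u | -w ≤ u i} =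
      closedBall 0 1 ∩ {u | 0 ≤ u i} ∪ -(closedBall 0 1 ∩ {u | u i ∈ Icc 0 w}) := by
    ext u
    simp only [mem_union, mem_inter_iff, Set.mem_neg, mem_closedBall_zero_iff, norm_neg,
      mem_ofPred_eq, PiLp.neg_apply, mem_Icc, neg_nonneg, neg_le]
    constructor
    · rintro ⟨hu, h⟩; rcases le_total 0 (u i) with h' | h' <;> tauto
    · rintro (⟨hu, h⟩ | ⟨hu, -, h⟩)
      exacts [⟨hu, by linarith⟩, ⟨hu, h⟩]
  rw [hS, volume_union_neg (fun u hu => hu.2) (fun u hu => hu.2.1)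
    (measurableSet_closedBall.inter (measurableSet_coord_mem i measurableSet_Icc))]

theorem volume_closedBall_inter_coord_ge (i : ι) {r : ℝ} (hr : 0 < r) (c : ℝ) :
    volume (closedBall (0 : EuclideanSpace ℝ ι) r ∩ {u | c ≤ u i}) =
      ENNReal.ofReal (r ^ Fintype.card ι) *
        volume (closedBall (0 : EuclideanSpace ℝ ι) 1 ∩ {u | c / r ≤ u i}) := by
  have hS : closedBall (0 : EuclideanSpace ℝ ι) r ∩ {u | c ≤ u i} =
      r • (closedBall 0 1 ∩ {u | c / r ≤ u i}) := by
    ext u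
    rw [mem_smul_set_iff_inv_smul_mem₀ hr.ne']
    simp only [mem_inter_iff, mem_closedBall_zero_iff, mem_ofPred_eq, norm_smul, norm_inv,
      Real.norm_of_nonneg hr.le, PiLp.smul_apply, smul_eq_mul, inv_mul_le_one₀ hr,
      div_le_iff₀' hr, mul_inv_cancel_left₀ hr.ne']
  rw [hS, Measure.addHaar_smul, finrank_euclideanSpace, abs_of_pos (by positivity)]

end Coordinates

theorem OrthonormalBasis.volume_closedBall_inter_inner_mem {ι E : Type*} [Fintype ι]
    [NormedAddCommGroup E] [InnerProductSpace ℝ E] [FiniteDimensional ℝ E] [MeasurableSpace E]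
    [BorelSpace E] (b : OrthonormalBasis ι ℝ E) (i : ι) (x : E) (r : ℝ) {S : Set ℝ}
    (hS : MeasurableSet S) :
    volume (closedBall x r ∩ {y | ⟪b i, y - x⟫ ∈ S}) =
      volume (closedBall (0 : EuclideanSpace ℝ ι) r ∩ {u | u i ∈ S}) := by
  have hmp : MeasurePreserving (fun y => b.repr (y - x)) :=
    b.measurePreserving_repr.comp (measurePreserving_sub_right volume x)
  rw [← hmp.measure_preimage
    (measurableSet_closedBall.inter (measurableSet_coord_mem i hS)).nullMeasurableSet]
  congr 1
  ext y
  simp only [mem_preimage, mem_inter_iff, mem_ofPred_eq, mem_closedBall, dist_eq_norm, sub_zero,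
    LinearIsometryEquiv.norm_map, b.repr_apply_apply]

theorem exists_orthonormalBasis_apply_eq {ι E : Type*} [Fintype ι] [NormedAddCommGroup E]
    [InnerProductSpace ℝ E] [FiniteDimensional ℝ E] (hE : Module.finrank ℝ E = Fintype.card ι)
    (i : ι) {n : E} (hn : ‖n‖ = 1) : ∃ b : OrthonormalBasis ι ℝ E, b i = n := by
  have hon : Orthonormal ℝ (({i} : Set ι).domRestrict fun _ => n) :=
    ⟨fun _ => hn, fun j k hjk => absurd (Subsingleton.elim j k) hjk⟩
  obtain ⟨b, hb⟩ := hon.exists_orthonormalBasis_extension_of_card_eq hE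
  exact ⟨b, hb i rfl⟩

theorem volume_closedBall_inter_coord_mem_Icc_le (m : ℕ) (r c₁ c₂ : ℝ) :
    volume (closedBall (0 : EuclideanSpace ℝ (Fin (m + 1))) r ∩ {u | u 0 ∈ Icc c₁ c₂}) ≤
      ENNReal.ofReal (c₂ - c₁) * volume (closedBall (0 : EuclideanSpace ℝ (Fin m)) r) := by
  let g := Prod.map id (WithLp.toLp 2) ∘ MeasurableEquiv.piFinSuccAbove (fun _ => ℝ) 0 ∘
    WithLp.ofLp (p := 2) (V := Fin (m + 1) → ℝ)
  have hg : MeasurePreserving g volume (volume.prod volume) :=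
    ((MeasurePreserving.id volume).prod (PiLp.volume_preserving_toLp (Fin m))).comp
      ((volume_preserving_piFinSuccAbove (fun _ => ℝ) 0).comp (PiLp.volume_preserving_ofLp _))
  have hsub : closedBall (0 : EuclideanSpace ℝ (Fin (m + 1))) r ∩ {u | u 0 ∈ Icc c₁ c₂} ⊆
      g ⁻¹' (Icc c₁ c₂ ×ˢ closedBall 0 r) := by
    rintro u ⟨hu, hu0⟩
    refine ⟨hu0, ?_⟩
    rw [mem_closedBall_zero_iff] at hu ⊢
    refine le_trans ?_ hu
    refine pow_le_pow_iff_left₀ (norm_nonneg _) (norm_nonneg _) two_ne_zero |>.1 ?_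
    rw [EuclideanSpace.real_norm_sq_eq, EuclideanSpace.real_norm_sq_eq, Fin.sum_univ_succ]
    simpa [g, MeasurableEquiv.piFinSuccAbove, Fin.tail] using
      le_add_of_nonneg_left (a := ∑ j : Fin m, u j.succ ^ 2) (sq_nonneg (u 0))
  calc _ ≤ volume (g ⁻¹' (Icc c₁ c₂ ×ˢ closedBall 0 r)) := measure_mono hsub
    _ = _ := by
      rw [hg.measure_preimage (measurableSet_Icc.prod measurableSet_closedBall).nullMeasurableSet,
        Measure.prod_prod, Real.volume_Icc]

theorem slabVol_succ (m : ℕ) (u : ℝ) :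
    slabVol (m + 1) u =
      volume.real (closedBall (0 : EuclideanSpace ℝ (Fin (m + 1))) 1 ∩ {y | y 0 ∈ Icc 0 u}) := by
  rw [slabVol, measureReal_def]
  congr 2
  ext y
  simp [Fin.zero_eta]

theorem two_mul_volume_real_closedBall_inter_coord_nonneg (m : ℕ) :
    2 * volume.real (closedBall (0 : EuclideanSpace ℝ (Fin (m + 1))) 1 ∩ {u | 0 ≤ u 0}) =
      ubv (m + 1) := by
  rw [ubv, ← Measure.addHaar_closedBall_eq_addHaar_ball, ←
    two_mul_volume_closedBall_inter_coord_nonneg, ENNReal.toReal_mul]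
  rfl

theorem volume_real_closedBall (m : ℕ) {r : ℝ} (hr : 0 ≤ r) :
    volume.real (closedBall (0 : EuclideanSpace ℝ (Fin m)) r) = ubv m * r ^ m := by
  rw [measureReal_def, Measure.addHaar_closedBall _ _ hr, finrank_euclideanSpace_fin,
    ENNReal.toReal_mul, ENNReal.toReal_ofReal (by positivity), ubv, mul_comm]

theorem abs_measureReal_sub_le_of_subset {α : Type*} [MeasurableSpace α] {μ : Measure α}
    {I X Y O S : Set α} (hIX : I ⊆ X) (hXO : X ⊆ O) (hIY : I ⊆ Y) (hYO : Y ⊆ O)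
    (hO : O ⊆ I ∪ S) (hOfin : μ O ≠ ⊤) (hSfin : μ S ≠ ⊤) :
    |μ.real X - μ.real Y| ≤ μ.real S := by
  have hIfin : μ I ≠ ⊤ := measure_ne_top_of_subset (hIX.trans hXO) hOfin
  have hOS : μ.real O ≤ μ.real I + μ.real S :=
    (measureReal_mono hO).trans (measureReal_union_le I S)
  rw [abs_sub_le_iff]
  constructor <;> linarith [measureReal_mono hIX (measure_ne_top_of_subset hXO hOfin),
    measureReal_mono hIY (measure_ne_top_of_subset hYO hOfin), measureReal_mono hXO hOfin,
    measureReal_mono hYO hOfin]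

section Slabs

variable {E : Type*} [NormedAddCommGroup E] [InnerProductSpace ℝ E] [FiniteDimensional ℝ E]
  [MeasurableSpace E] [BorelSpace E] {m : ℕ}

theorem volume_real_closedBall_inter_halfspace (hE : Module.finrank ℝ E = m + 1) {z n : E}
    (hn : ‖n‖ = 1) {r w : ℝ} (hr : 0 < r) (hw : 0 ≤ w) :
    volume.real (closedBall (z + w • n) r ∩ {y | 0 ≤ ⟪n, y - z⟫}) =
      (ubv (m + 1) / 2 + slabVol (m + 1) (w / r)) * r ^ (m + 1) := by
  obtain ⟨b, rfl⟩ := exists_orthonormalBasis_apply_eq (ι := Fin (m + 1)) (by simpa) 0 hn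
  have hset : {y | 0 ≤ ⟪b 0, y - z⟫} = {y | ⟪b 0, y - (z + w • b 0)⟫ ∈ Ici (-w)} := by
    ext y
    simp only [mem_ofPred_eq, mem_Ici, sub_add_eq_sub_sub, inner_sub_right, real_inner_smul_right,
      real_inner_self_eq_norm_sq, hn]
    constructor <;> intro <;> linarith
  have hfin (s : Set (EuclideanSpace ℝ (Fin (m + 1)))) : volume (closedBall 0 1 ∩ s) ≠ ⊤ :=
    measure_ne_top_of_subset inter_subset_left measure_closedBall_lt_top.ne
  rw [hset, measureReal_def, b.volume_closedBall_inter_inner_mem 0 _ r measurableSet_Ici]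
  change (volume (closedBall 0 r ∩ {u : EuclideanSpace ℝ (Fin (m + 1)) | -w ≤ u 0})).toReal = _
  rw [volume_closedBall_inter_coord_ge 0 hr, neg_div,
    volume_closedBall_inter_coord_ge_neg 0 (div_nonneg hw hr.le), ENNReal.toReal_mul,
    ENNReal.toReal_add (hfin _) (hfin _), ENNReal.toReal_ofReal (by positivity), Fintype.card_fin,
    ← two_mul_volume_real_closedBall_inter_coord_nonneg, slabVol_succ]
  simp only [measureReal_def]
  ring

theorem volume_real_closedBall_inter_slab_le (hE : Module.finrank ℝ E = m + 1) (x z : E) {n : E}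
    (hn : ‖n‖ = 1) {r c₁ c₂ : ℝ} (hr : 0 ≤ r) (hc : c₁ ≤ c₂) :
    volume.real (closedBall x r ∩ {y | ⟪n, y - z⟫ ∈ Icc c₁ c₂}) ≤ (c₂ - c₁) * ubv m * r ^ m := by
  obtain ⟨b, rfl⟩ := exists_orthonormalBasis_apply_eq (ι := Fin (m + 1)) (by simpa) 0 hn
  set t := ⟪b 0, x - z⟫
  have hset : {y | ⟪b 0, y - z⟫ ∈ Icc c₁ c₂} = {y | ⟪b 0, y - x⟫ ∈ Icc (c₁ - t) (c₂ - t)} := by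
    ext y
    simp only [mem_ofPred_eq, mem_Icc, t, ← sub_add_sub_cancel y x z, inner_add_right]
    constructor <;> intro h <;> constructor <;> linarith [h.1, h.2]
  have hle := volume_closedBall_inter_coord_mem_Icc_le m r (c₁ - t) (c₂ - t)
  rw [← b.volume_closedBall_inter_inner_mem 0 x r measurableSet_Icc, ← hset,
    sub_sub_sub_cancel_right] at hle
  calc _ ≤ (ENNReal.ofReal (c₂ - c₁) *
          volume (closedBall (0 : EuclideanSpace ℝ (Fin m)) r)).toReal :=
        ENNReal.toReal_mono
          (ENNReal.mul_ne_top ENNReal.ofReal_ne_top measure_closedBall_lt_top.ne) hle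
    _ = _ := by
      rw [ENNReal.toReal_mul, ← measureReal_def, volume_real_closedBall m hr,
        ENNReal.toReal_ofReal (by linarith)]
      ring

theorem abs_volume_real_sub_le_of_halfspace_subset (hE : Module.finrank ℝ E = m + 1)
    (x z : E) {n : E} (hn : ‖n‖ = 1) {r δ₁ δ₂ : ℝ} (hr : 0 ≤ r) (hδ₁ : 0 ≤ δ₁) (hδ₂ : 0 ≤ δ₂)
    {X : Set E} (hX₁ : closedBall x r ∩ {y | δ₁ ≤ ⟪n, y - z⟫} ⊆ X)
    (hX₂ : X ⊆ closedBall x r ∩ {y | -δ₂ ≤ ⟪n, y - z⟫}) :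
    |volume.real X - volume.real (closedBall x r ∩ {y | 0 ≤ ⟪n, y - z⟫})| ≤
      (δ₁ + δ₂) * ubv m * r ^ m := by
  have hfin (s : Set E) : volume (closedBall x r ∩ s) ≠ ⊤ :=
    measure_ne_top_of_subset inter_subset_left measure_closedBall_lt_top.ne
  have hmono {c c' : ℝ} (h : c ≤ c') :
      closedBall x r ∩ {y | c' ≤ ⟪n, y - z⟫} ⊆ closedBall x r ∩ {y | c ≤ ⟪n, y - z⟫} :=
    fun y hy => ⟨hy.1, h.trans hy.2⟩
  have hcover : closedBall x r ∩ {y | -δ₂ ≤ ⟪n, y - z⟫} ⊆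
      closedBall x r ∩ {y | δ₁ ≤ ⟪n, y - z⟫} ∪
        closedBall x r ∩ {y | ⟪n, y - z⟫ ∈ Icc (-δ₂) δ₁} := by
    rintro y ⟨hy, hyn⟩
    by_cases h : δ₁ ≤ ⟪n, y - z⟫
    exacts [Or.inl ⟨hy, h⟩, Or.inr ⟨hy, hyn, (not_le.1 h).le⟩]
  calc _ ≤ _ := abs_measureReal_sub_le_of_subset hX₁ hX₂ (hmono hδ₁) (hmono (by linarith)) hcover
        (hfin _) (hfin _)
    _ ≤ (δ₁ - -δ₂) * ubv m * r ^ m :=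
        volume_real_closedBall_inter_slab_le hE x z hn hr (by linarith)
    _ = _ := by ring

end Slabs

theorem ball_inter_volume_estimate_general (d : ℕ) (hd : 1 ≤ d)
    (A : Set (EuclideanSpace ℝ (Fin d))) (hAc : IsCompact A)
    (τ : ℝ) (hτ : 0 < τ) (hsc : SphereCond d A τ)
    (r : ℝ) (hr0 : 0 < r) (hrτ : r < τ)
    (x : EuclideanSpace ℝ (Fin d)) (hx : x ∈ A)
    (a : ℝ) (ha : a = Metric.infDist x (frontier A)) (har : a < r) :
    |(volume (Metric.closedBall x r ∩ A)).toReal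
        - ((ubv d / 2 + slabVol d (a / r)) * r ^ d)|
      ≤ 2 * ubv (d-1) * r ^ (d+1) / τ := by
  obtain ⟨m, rfl⟩ : ∃ m, d = m + 1 := ⟨d - 1, by omega⟩
  obtain ⟨z, n, hn, hxa, hin, hout⟩ := hsc.exists_eq_add_infDist_smul hτ hAc hx
  rw [← ha] at hxa
  subst hxa
  have ha0 : 0 ≤ a := ha ▸ infDist_nonneg
  have hE := finrank_euclideanSpace_fin (𝕜 := ℝ) (n := m + 1)
  calc _ = |volume.real (closedBall (z + a • n) r ∩ A) -
        volume.real (closedBall (z + a • n) r ∩ {y | 0 ≤ ⟪n, y - z⟫})| := by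
        rw [volume_real_closedBall_inter_halfspace hE hn hr0 ha0]; rfl
    _ ≤ (3 * r ^ 2 / (2 * τ) + r ^ 2 / (2 * τ)) * ubv m * r ^ m :=
        abs_volume_real_sub_le_of_halfspace_subset hE _ z hn hr0.le (by positivity) (by positivity)
          (fun y hy => ⟨hy.1, hin (closedBall_inter_halfspace_subset_closedBall hn ha0 har.le
            hrτ.le hτ hy)⟩)
          (fun y hy => ⟨hy.1, closedBall_inter_subset_halfspace_of_disjoint_ball hn ha0 hτ hout hy⟩)
    _ = _ := by
      rw [Nat.add_sub_cancel]
      field_simp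
      ring

/-- sliced-ball volume estimate near the boundary. -/
theorem ball_inter_volume_estimate (d : ℕ) (hd : 1 ≤ d)
    (A : Set (EuclideanSpace ℝ (Fin d))) (hAc : IsCompact A)
    (hC11 : HasC11Boundary d A) (hreg : closure (interior A) = A)
    (τ : ℝ) (hτ : 0 < τ) (hsc : SphereCond d A τ)
    (r : ℝ) (hr0 : 0 < r) (hrτ : r < τ)
    (x : EuclideanSpace ℝ (Fin d)) (hx : x ∈ A)
    (a : ℝ) (ha : a = Metric.infDist x (frontier A)) (har : a < r) :
    |(volume (Metric.closedBall x r ∩ A)).toReal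
        - ((ubv d / 2 + slabVol d (a / r)) * r ^ d)|
      ≤ 2 * ubv (d-1) * r ^ (d+1) / τ :=
  ball_inter_volume_estimate_general d hd A hAc τ hτ hsc r hr0 hrτ x hx a ha har
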